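/- arXiv:math/0612407 — 2 statements merged into one kernel-verified Lean document; each statement's English description precedes it below -/
import Mathlib

section
/- The functions V₁(x,y,z) = (x+1)(y+1)(z+1)(a+x+y+z)/(xyz) and V₂(x,y,z) = (1+y+z)(1+x+y)(a+x+y+z+xz)/(xyz) are first integrals of the vector field X on O⁺, i.e. ∇V₁(q)·X(q) = 0 and ∇V₂(q)·X(q) = 0 for all q ∈ O⁺. -/
/-!
`V₁` and `V₂` are quotients `N / (xyz)` of polynomials, so by the quotient rule `∇Vᵢ · X = 0`
amounts to `(∇N · X) xyz = N (∇(xyz) · X)`. After clearing the denominators `yz`, `xz`, `xy` of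
the components of `X`, this is a polynomial identity in `x, y, z, a`.
-/

open ContinuousLinearMap

section QuotientRule

variable {𝕜 E : Type*} [NontriviallyNormedField 𝕜] [NormedAddCommGroup E] [NormedSpace 𝕜 E]

theorem fderiv_fun_div_apply {c d : E → 𝕜} {x : E} (hc : DifferentiableAt 𝕜 c x)
    (hd : DifferentiableAt 𝕜 d x) (hx : d x ≠ 0) (v : E) :
    fderiv 𝕜 (fun y => c y / d y) x v = (fderiv 𝕜 c x v * d x - c x * fderiv 𝕜 d x v) / d x ^ 2 := by
  have hline : HasLineDerivAt 𝕜 (fun y => c y / d y)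
      ((fderiv 𝕜 c x v * d x - c x * fderiv 𝕜 d x v) / d x ^ 2) x v := by
    have h := (hc.hasFDerivAt.hasLineDerivAt v).fun_div (hd.hasFDerivAt.hasLineDerivAt v)
      (by rwa [zero_smul, add_zero])
    rwa [zero_smul, add_zero] at h
  have hcd : DifferentiableAt 𝕜 (fun y => c y / d y) x := by fun_prop (disch := exact hx)
  rw [← hcd.lineDeriv_eq_fderiv, hline.lineDeriv]

end QuotientRule

noncomputable section Lyness

variable (a : ℝ)

def lynessField (p : ℝ × ℝ × ℝ) : ℝ × ℝ × ℝ :=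
  ((p.1 + 1) * (1 + p.2.1 + p.2.2) * (p.2.1 * p.2.2 - p.1 - p.2.1 - a) / (p.2.1 * p.2.2),
   (p.2.1 + 1) * (p.2.2 - p.1) * (a + p.1 + p.2.1 + p.2.2 + p.1 * p.2.2) / (p.1 * p.2.2),
   (p.2.2 + 1) * (1 + p.1 + p.2.1) * (a + p.2.1 + p.2.2 - p.1 * p.2.1) / (p.1 * p.2.1))

def lynessV₁ (p : ℝ × ℝ × ℝ) : ℝ :=
  (p.1 + 1) * (p.2.1 + 1) * (p.2.2 + 1) * (a + p.1 + p.2.1 + p.2.2) / (p.1 * p.2.1 * p.2.2)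

def lynessV₂ (p : ℝ × ℝ × ℝ) : ℝ :=
  (1 + p.2.1 + p.2.2) * (1 + p.1 + p.2.1) *
    (a + p.1 + p.2.1 + p.2.2 + p.1 * p.2.2) / (p.1 * p.2.1 * p.2.2)

variable {a} {q : ℝ × ℝ × ℝ}

theorem fderiv_lynessV₁_lynessField (hx : 0 < q.1) (hy : 0 < q.2.1) (hz : 0 < q.2.2) :
    fderiv ℝ (lynessV₁ a) q (lynessField a q) = 0 := by
  obtain ⟨x, y, z⟩ := q
  dsimp only at hx hy hz
  unfold lynessV₁
  rw [fderiv_fun_div_apply (by fun_prop) (by fun_prop) (by positivity)]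
  simp (disch := fun_prop) only [fderiv_fun_mul, fderiv_fun_add, fderiv_const_apply,
    fderiv_fun_id, fderiv.fst, fderiv.snd, comp_id, smul_add, add_apply, zero_apply, smul_apply,
    smul_eq_mul, comp_apply, coe_fst', coe_snd']
  simp only [lynessField]
  field_simp
  ring

theorem fderiv_lynessV₂_lynessField (hx : 0 < q.1) (hy : 0 < q.2.1) (hz : 0 < q.2.2) :
    fderiv ℝ (lynessV₂ a) q (lynessField a q) = 0 := by
  obtain ⟨x, y, z⟩ := q
  dsimp only at hx hy hz
  unfold lynessV₂
  rw [fderiv_fun_div_apply (by fun_prop) (by fun_prop) (by positivity)]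
  simp (disch := fun_prop) only [fderiv_fun_mul, fderiv_fun_add, fderiv_const_apply,
    fderiv_fun_id, fderiv.fst, fderiv.snd, comp_id, smul_add, add_apply, zero_apply, smul_apply,
    smul_eq_mul, comp_apply, coe_fst', coe_snd']
  simp only [lynessField]
  field_simp
  ring

end Lyness

theorem lyness_vector_field_first_integrals_general (a : ℝ) :
    let X : ℝ × ℝ × ℝ → ℝ × ℝ × ℝ := fun p =>
      ((p.1 + 1) * (1 + p.2.1 + p.2.2) * (p.2.1 * p.2.2 - p.1 - p.2.1 - a) / (p.2.1 * p.2.2),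
       (p.2.1 + 1) * (p.2.2 - p.1) * (a + p.1 + p.2.1 + p.2.2 + p.1 * p.2.2) / (p.1 * p.2.2),
       (p.2.2 + 1) * (1 + p.1 + p.2.1) * (a + p.2.1 + p.2.2 - p.1 * p.2.1) / (p.1 * p.2.1))
    let V1 : ℝ × ℝ × ℝ → ℝ := fun p =>
      (p.1 + 1) * (p.2.1 + 1) * (p.2.2 + 1) * (a + p.1 + p.2.1 + p.2.2) /
        (p.1 * p.2.1 * p.2.2)
    let V2 : ℝ × ℝ × ℝ → ℝ := fun p =>
      (1 + p.2.1 + p.2.2) * (1 + p.1 + p.2.1) *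
        (a + p.1 + p.2.1 + p.2.2 + p.1 * p.2.2) / (p.1 * p.2.1 * p.2.2)
    ∀ q : ℝ × ℝ × ℝ, 0 < q.1 → 0 < q.2.1 → 0 < q.2.2 →
      fderiv ℝ V1 q (X q) = 0 ∧ fderiv ℝ V2 q (X q) = 0 := by
  intro X V1 V2 q hx hy hz
  exact ⟨fderiv_lynessV₁_lynessField hx hy hz, fderiv_lynessV₂_lynessField hx hy hz⟩

/-- The rational first integrals `V₁` and `V₂` of the Lyness map are also
first integrals of the vector field `X`: `∇Vᵢ(q)·X(q) = 0` on the positive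
octant, stated as `(DVᵢ)_q X(q) = 0`. -/
theorem lyness_vector_field_first_integrals (a : ℝ) (ha : 0 < a) :
    let X : ℝ × ℝ × ℝ → ℝ × ℝ × ℝ := fun p =>
      ((p.1 + 1) * (1 + p.2.1 + p.2.2) * (p.2.1 * p.2.2 - p.1 - p.2.1 - a) / (p.2.1 * p.2.2),
       (p.2.1 + 1) * (p.2.2 - p.1) * (a + p.1 + p.2.1 + p.2.2 + p.1 * p.2.2) / (p.1 * p.2.2),
       (p.2.2 + 1) * (1 + p.1 + p.2.1) * (a + p.2.1 + p.2.2 - p.1 * p.2.1) / (p.1 * p.2.1))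
    let V1 : ℝ × ℝ × ℝ → ℝ := fun p =>
      (p.1 + 1) * (p.2.1 + 1) * (p.2.2 + 1) * (a + p.1 + p.2.1 + p.2.2) /
        (p.1 * p.2.1 * p.2.2)
    let V2 : ℝ × ℝ × ℝ → ℝ := fun p =>
      (1 + p.2.1 + p.2.2) * (1 + p.1 + p.2.1) *
        (a + p.1 + p.2.1 + p.2.2 + p.1 * p.2.2) / (p.1 * p.2.1 * p.2.2)
    ∀ q : ℝ × ℝ × ℝ, 0 < q.1 → 0 < q.2.1 → 0 < q.2.2 →
      fderiv ℝ V1 q (X q) = 0 ∧ fderiv ℝ V2 q (X q) = 0 :=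
  lyness_vector_field_first_integrals_general a
end

section
/- Define h(x) = V₁(x, (x+a)/(x−1), x) = (2x+a−1)²(x+1)²/(x(x+a)(x−1)) for x > 1. Then h has a unique critical point at x = x_c = 1+√(1+a), which is a strict minimum, h(x) → +∞ as x → 1⁺ and as x → +∞; consequently, for every k > h(x_c) the equation h(x) = k has exactly two solutions in (1, ∞), one in (1, x_c) and one in (x_c, ∞). -/
open Filter Set Topology

/-! Along the curve, `h' = ((x - 1)² - (1 + a)) · Q / D²` with `D = x (x + a) (x - 1)` and
`Q = lynessDerivFactor a x > 0` for `x > 1`, so `h' = c · (x - x_c)` with `c > 0`: `h` strictly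
decreases on `(1, x_c]` and strictly increases on `[x_c, ∞)`. Writing
`h = (2x + a - 1)² / (x (x + a)) · (x + 1)² / (x - 1)`, the first factor is at least `1` and the
second equals `x + 3 + 4 / (x - 1)`, so `h x ≥ x + 1 / (x - 1)`, which blows up at both ends.
The intermediate value theorem and injectivity on each branch then give exactly one solution of
`h x = k` on each side of `x_c`. -/

theorem IsPreconnected.existsUnique_mem_diff_eq_of_tendsto_atTop {X α : Type*}
    [TopologicalSpace X] [LinearOrder α] [TopologicalSpace α] [OrderClosedTopology α]
    {s : Set X} (hs : IsPreconnected s) {l : Filter X} [NeBot l] (hl : l ≤ 𝓟 s) {f : X → α}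
    (hf : ContinuousOn f s) (hinj : InjOn f s) (ht : Tendsto f l atTop) {c : X} (hc : c ∈ s)
    {k : α} (hk : f c < k) : ∃! x, x ∈ s \ {c} ∧ f x = k := by
  obtain ⟨x, hxs, hfx⟩ := hs.intermediate_value_Ici hc hl hf ht hk.le
  refine ⟨x, ⟨⟨hxs, fun hxc => hk.ne (hxc ▸ hfx)⟩, hfx⟩, fun y ⟨hy, hfy⟩ => ?_⟩
  exact hinj hy.1 hxs (hfy.trans hfx.symm)

noncomputable def lynessV1 (a x y z : ℝ) : ℝ :=
  (x + 1) * (y + 1) * (z + 1) * (a + x + y + z) / (x * y * z)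

noncomputable def lynessH (a x : ℝ) : ℝ :=
  (2 * x + a - 1) ^ 2 * (x + 1) ^ 2 / (x * (x + a) * (x - 1))

noncomputable def lynessCrit (a : ℝ) : ℝ :=
  1 + √(1 + a)

def lynessDerivFactor (a x : ℝ) : ℝ :=
  (x + 1) * (4 * x ^ 2 * (x - 1) + 8 * a * x ^ 2 + (a - 1) ^ 2 * (3 * x - 1))

section

variable {a x : ℝ}

theorem lynessV1_two_periodic (hx₀ : x ≠ 0) (hx₁ : x - 1 ≠ 0) :
    lynessV1 a x ((x + a) / (x - 1)) x = lynessH a x := by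
  unfold lynessV1 lynessH
  field_simp
  ring

theorem lynessDerivFactor_pos (ha : 0 ≤ a) (hx : 1 < x) : 0 < lynessDerivFactor a x := by
  unfold lynessDerivFactor
  have : 0 < 4 * x ^ 2 * (x - 1) := by have := sub_pos.2 hx; positivity
  have : 0 ≤ (a - 1) ^ 2 * (3 * x - 1) := mul_nonneg (sq_nonneg _) (by linarith)
  have : 0 ≤ 8 * a * x ^ 2 := by positivity
  exact mul_pos (by linarith) (by linarith)

theorem lynessH_denom_pos (ha : 0 ≤ a) (hx : 1 < x) : 0 < x * (x + a) * (x - 1) := by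
  have := sub_pos.2 hx
  exact mul_pos (mul_pos (by linarith) (by linarith)) this

theorem hasDerivAt_lynessH (hD : x * (x + a) * (x - 1) ≠ 0) :
    HasDerivAt (lynessH a)
      (((x - 1) ^ 2 - (1 + a)) * lynessDerivFactor a x / (x * (x + a) * (x - 1)) ^ 2) x := by
  have hN := ((((hasDerivAt_id' x).const_mul 2).add_const a).sub_const 1 |>.fun_pow 2).fun_mul
    (((hasDerivAt_id' x).add_const 1).fun_pow 2)
  have hD' := ((hasDerivAt_id' x).fun_mul ((hasDerivAt_id' x).add_const a)).fun_mul
    ((hasDerivAt_id' x).sub_const 1)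
  refine (hN.fun_div hD' hD).congr_deriv ?_
  rw [div_eq_div_iff (pow_ne_zero 2 hD) (pow_ne_zero 2 hD), lynessDerivFactor]
  ring

theorem continuousOn_lynessH (ha : 0 ≤ a) : ContinuousOn (lynessH a) (Ioi 1) :=
  fun _ hx => (hasDerivAt_lynessH (lynessH_denom_pos ha hx).ne').continuousAt.continuousWithinAt

theorem one_lt_lynessCrit (ha : 0 ≤ a) : 1 < lynessCrit a := by
  rw [lynessCrit]
  have : 0 < √(1 + a) := Real.sqrt_pos.2 (by linarith)
  linarith

theorem exists_pos_deriv_lynessH_eq_mul (ha : 0 ≤ a) (hx : 1 < x) :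
    ∃ c > 0, deriv (lynessH a) x = c * (x - lynessCrit a) := by
  have hs : √(1 + a) ^ 2 = 1 + a := Real.sq_sqrt (by linarith)
  have hD := lynessH_denom_pos ha hx
  refine ⟨(x - 1 + √(1 + a)) * lynessDerivFactor a x / (x * (x + a) * (x - 1)) ^ 2, ?_, ?_⟩
  · have := lynessDerivFactor_pos ha hx
    have := Real.sqrt_nonneg (1 + a)
    have : 0 < x - 1 + √(1 + a) := by linarith
    positivity
  · rw [(hasDerivAt_lynessH hD.ne').deriv, lynessCrit]
    linear_combination (lynessDerivFactor a x / (x * (x + a) * (x - 1)) ^ 2) * hs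

theorem deriv_lynessH_eq_zero_iff (ha : 0 ≤ a) (hx : 1 < x) :
    deriv (lynessH a) x = 0 ↔ x = lynessCrit a := by
  obtain ⟨c, hc, hderiv⟩ := exists_pos_deriv_lynessH_eq_mul ha hx
  rw [hderiv, mul_eq_zero, sub_eq_zero, or_iff_right hc.ne']

theorem strictAntiOn_lynessH (ha : 0 ≤ a) : StrictAntiOn (lynessH a) (Ioc 1 (lynessCrit a)) := by
  refine strictAntiOn_of_deriv_neg (convex_Ioc _ _)
    ((continuousOn_lynessH ha).mono Ioc_subset_Ioi_self) fun x hx => ?_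
  rw [interior_Ioc] at hx
  obtain ⟨c, hc, hderiv⟩ := exists_pos_deriv_lynessH_eq_mul ha hx.1
  rw [hderiv]
  exact mul_neg_of_pos_of_neg hc (sub_neg.2 hx.2)

theorem strictMonoOn_lynessH (ha : 0 ≤ a) : StrictMonoOn (lynessH a) (Ici (lynessCrit a)) := by
  refine strictMonoOn_of_deriv_pos (convex_Ici _)
    ((continuousOn_lynessH ha).mono (Ici_subset_Ioi.2 (one_lt_lynessCrit ha))) fun x hx => ?_
  rw [interior_Ici] at hx
  obtain ⟨c, hc, hderiv⟩ := exists_pos_deriv_lynessH_eq_mul ha ((one_lt_lynessCrit ha).trans hx)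
  rw [hderiv]
  exact mul_pos hc (sub_pos.2 hx)

theorem lynessH_lynessCrit_lt (ha : 0 ≤ a) (hx : 1 < x) (hne : x ≠ lynessCrit a) :
    lynessH a (lynessCrit a) < lynessH a x := by
  rcases hne.lt_or_gt with hlt | hgt
  · exact strictAntiOn_lynessH ha ⟨hx, hlt.le⟩ ⟨one_lt_lynessCrit ha, le_rfl⟩ hlt
  · exact strictMonoOn_lynessH ha self_mem_Ici hgt.le hgt

theorem add_inv_sub_one_le_lynessH (ha : 0 ≤ a) (hx : 1 < x) :
    x + (x - 1)⁻¹ ≤ lynessH a x := by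
  have hx₁ := sub_pos.2 hx
  have hN : x * (x + a) ≤ (2 * x + a - 1) ^ 2 := by nlinarith
  have hD : x * (x - 1) + 1 ≤ (x + 1) ^ 2 := by nlinarith
  rw [lynessH, le_div_iff₀ (lynessH_denom_pos ha hx)]
  calc (x + (x - 1)⁻¹) * (x * (x + a) * (x - 1)) = x * (x + a) * (x * (x - 1) + 1) := by
        field_simp
    _ ≤ (2 * x + a - 1) ^ 2 * (x + 1) ^ 2 := mul_le_mul hN hD (by positivity) (by positivity)

theorem tendsto_lynessH_atTop (ha : 0 ≤ a) : Tendsto (lynessH a) atTop atTop := by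
  refine tendsto_atTop_mono' _ ?_ tendsto_id
  filter_upwards [eventually_gt_atTop 1] with x hx
  have := inv_pos.2 (sub_pos.2 hx)
  exact (le_add_of_nonneg_right this.le).trans (add_inv_sub_one_le_lynessH ha hx)

theorem tendsto_lynessH_nhdsGT_one (ha : 0 ≤ a) : Tendsto (lynessH a) (𝓝[>] 1) atTop := by
  have hsub : Tendsto (fun x : ℝ => x - 1) (𝓝[>] 1) (𝓝[>] 0) :=
    tendsto_nhdsWithin_of_tendsto_nhds_of_eventually_within _
      (((continuous_sub_right 1).tendsto' 1 0 (sub_self 1)).mono_left nhdsWithin_le_nhds)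
      (eventually_nhdsWithin_of_forall fun _ hx => mem_Ioi.2 (sub_pos.2 hx))
  refine tendsto_atTop_mono' _ ?_ (tendsto_inv_nhdsGT_zero.comp hsub)
  filter_upwards [self_mem_nhdsWithin] with x hx
  have : (0 : ℝ) ≤ x := by linarith [mem_Ioi.1 hx]
  exact (le_add_of_nonneg_left this).trans (add_inv_sub_one_le_lynessH ha hx)

end

/-- The restriction `h(x) = V₁(x, (x+a)/(x-1), x) = (2x+a-1)²(x+1)²/(x(x+a)(x-1))`
of `V₁` to the curve of 2-periodic points has a unique critical point at
`x_c = 1 + √(1+a)`, a strict minimum; it tends to `+∞` as `x → 1⁺` and as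
`x → +∞`; hence for each `k > h(x_c)` the equation `h(x) = k` has exactly one
solution in `(1, x_c)` and exactly one in `(x_c, ∞)`. -/
theorem lyness_V1_on_two_periodic_curve (a : ℝ) (ha : 0 < a) :
    let xc : ℝ := 1 + Real.sqrt (1 + a)
    let V1 : ℝ → ℝ → ℝ → ℝ := fun x y z =>
      (x + 1) * (y + 1) * (z + 1) * (a + x + y + z) / (x * y * z)
    let h : ℝ → ℝ := fun x =>
      (2 * x + a - 1) ^ 2 * (x + 1) ^ 2 / (x * (x + a) * (x - 1))
    (∀ x : ℝ, 1 < x → V1 x ((x + a) / (x - 1)) x = h x) ∧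
    (∀ x : ℝ, 1 < x → (deriv h x = 0 ↔ x = xc)) ∧
    (∀ x : ℝ, 1 < x → x ≠ xc → h xc < h x) ∧
    Tendsto h (nhdsWithin 1 (Ioi 1)) atTop ∧
    Tendsto h atTop atTop ∧
    (∀ k : ℝ, h xc < k →
      (∃! x : ℝ, x ∈ Ioo 1 xc ∧ h x = k) ∧ (∃! x : ℝ, x ∈ Ioi xc ∧ h x = k)) := by
  intro xc V1 h
  have ha₀ := ha.le
  have hxc : 1 < xc := one_lt_lynessCrit ha₀
  refine ⟨fun x hx => lynessV1_two_periodic (by linarith) (by linarith),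
    fun x hx => deriv_lynessH_eq_zero_iff ha₀ hx, fun x hx => lynessH_lynessCrit_lt ha₀ hx,
    tendsto_lynessH_nhdsGT_one ha₀, tendsto_lynessH_atTop ha₀, fun k hk => ⟨?_, ?_⟩⟩
  · have := isPreconnected_Ioc.existsUnique_mem_diff_eq_of_tendsto_atTop
      (le_principal_iff.2 (Ioc_mem_nhdsGT hxc))
      ((continuousOn_lynessH ha₀).mono Ioc_subset_Ioi_self) (strictAntiOn_lynessH ha₀).injOn
      (tendsto_lynessH_nhdsGT_one ha₀) ⟨hxc, le_rfl⟩ hk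
    rwa [Ioc_sdiff_right] at this
  · have := isPreconnected_Ici.existsUnique_mem_diff_eq_of_tendsto_atTop
      (le_principal_iff.2 (Ici_mem_atTop xc))
      ((continuousOn_lynessH ha₀).mono (Ici_subset_Ioi.2 hxc)) (strictMonoOn_lynessH ha₀).injOn
      (tendsto_lynessH_atTop ha₀) self_mem_Ici hk
    rwa [Ici_sdiff_left] at this
end
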